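/- For all x, x' ∈ ℝ, y ≠ 0, and λ ∈ ℂ with λ ∉ ℝ ∪ iℝ and λ_I ≠ ±κ, the Green function satisfies the reality symmetry conj(G(x,x',y,−conj(λ))) = G(x,x',y,λ); in fact conj(G_c(x,x',y,−conj(λ))) = G_c(x,x',y,λ) and conj(G_d(x,x',y,−conj(λ))) = G_d(x,x',y,λ). -/

import Mathlib

open MeasureTheory Filter Topology Set
open scoped ENNReal

noncomputable section

namespace KPII

/-- Heaviside step function: `1` for positive arguments, `0` otherwise. -/
def heav (t : ℝ) : ℝ := if 0 < t then 1 else 0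

/-- Continuous inverse cotangent with values in `(0, π)`. -/
def arccot (t : ℝ) : ℝ := Real.pi / 2 - Real.arctan t

def varphiP (κ x : ℝ) (l : ℂ) : ℂ :=
  1 - (2 * Complex.I * κ / (l + Complex.I * κ)) * (1 / (1 + Real.exp (-2 * κ * x)))

def varphiM (κ x : ℝ) (l : ℂ) : ℂ :=
  1 + (2 * Complex.I * κ / (l - Complex.I * κ)) * (1 / (1 + Real.exp (-2 * κ * x)))

def varthetaP (κ x : ℝ) (l : ℂ) : ℂ :=
  1 - (2 * Complex.I * κ / (l + Complex.I * κ)) * (1 / (1 + Real.exp (2 * κ * x)))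

def varthetaM (κ x : ℝ) (l : ℂ) : ℂ :=
  1 + (2 * Complex.I * κ / (l - Complex.I * κ)) * (1 / (1 + Real.exp (2 * κ * x)))

def phiP (κ x : ℝ) (l : ℂ) : ℂ := varphiP κ x l * Complex.exp (-(Complex.I) * l * x)
def phiM (κ x : ℝ) (l : ℂ) : ℂ := varphiM κ x l * Complex.exp (Complex.I * l * x)
def psiP (κ x : ℝ) (l : ℂ) : ℂ := varthetaP κ x l * Complex.exp (Complex.I * l * x)
def psiM (κ x : ℝ) (l : ℂ) : ℂ := varthetaM κ x l * Complex.exp (-(Complex.I) * l * x)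

def aP (κ : ℝ) (l : ℂ) : ℂ := (l - Complex.I * κ) / (l + Complex.I * κ)
def aM (κ : ℝ) (l : ℂ) : ℂ := (l + Complex.I * κ) / (l - Complex.I * κ)

/-- `a(λ)`: equal to `a₊` on the upper half plane and `a₋` on the lower half plane. -/
def aFn (κ : ℝ) (l : ℂ) : ℂ := if 0 < l.im then aP κ l else aM κ l

/-- `𝔤(x,x',λ)`. -/
def gFrak (κ x x' : ℝ) (l : ℂ) : ℂ :=
  if 0 < l.im then varphiP κ x l * varthetaP κ x' l else varphiM κ x' l * varthetaM κ x l

/-- Indicator of `{λ' : Re (λ² − (λ+λ')²) > 0}`. -/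
def chiP (l : ℂ) (t : ℝ) : ℝ := if 0 < (l ^ 2 - (l + t) ^ 2).re then 1 else 0

/-- Indicator of `{λ' : Re (λ² − (λ+λ')²) < 0}`. -/
def chiM (l : ℂ) (t : ℝ) : ℝ := if (l ^ 2 - (l + t) ^ 2).re < 0 then 1 else 0

/-- Continuous part of the Green function. -/
def Gc (κ x x' y : ℝ) (l : ℂ) : ℂ :=
  ∫ t : ℝ, ((heav y * chiM l t - heav (-y) * chiP l t : ℝ) : ℂ) *
    Complex.exp ((l ^ 2 - (l + t) ^ 2) * y) * phiP κ x (l + t) * psiP κ x' (l + t) /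
    (2 * Real.pi * aFn κ (l + t))

/-- Discrete part of the Green function. -/
def Gd (κ x x' y : ℝ) (l : ℂ) : ℂ :=
  ((-2 * heav (-y) * heav (κ - |l.im|) : ℝ) : ℂ) *
    Complex.exp ((l ^ 2 + (κ : ℂ) ^ 2) * y + ((Real.sign l.im * κ * (x - x') : ℝ) : ℂ)) *
    gFrak κ x x' ((Real.sign l.im : ℂ) * Complex.I * κ)

/-- The Green function `G`. -/
def G (κ x x' y : ℝ) (l : ℂ) : ℂ := Gc κ x x' y l + Gd κ x x' y l

/-- The Green function `G̃ = G e^{iλ(x−x')}`. -/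
def Gt (κ x x' y : ℝ) (l : ℂ) : ℂ := G κ x x' y l * Complex.exp (Complex.I * l * (x - x'))

/-- Mixed partial derivative `∂_y^j ∂_x^k` of a real-valued function on `ℝ²`. -/
def pdR (j k : ℕ) (v : ℝ → ℝ → ℝ) (x y : ℝ) : ℝ :=
  iteratedDeriv j (fun y' => iteratedDeriv k (fun x' => v x' y') x) y

/-- Mixed partial derivative `∂_y^j ∂_x^k` of a complex-valued function on `ℝ²`. -/
def pdC (j k : ℕ) (v : ℝ → ℝ → ℂ) (x y : ℝ) : ℂ :=
  iteratedDeriv j (fun y' => iteratedDeriv k (fun x' => v x' y') x) y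

/-- The set of regular spectral parameters: `λ ∉ ℝ ∪ iℝ` and `λ_I ≠ ±κ`. -/
def goodSet (κ : ℝ) : Set ℂ := {l : ℂ | l.re ≠ 0 ∧ l.im ≠ 0 ∧ l.im ≠ κ ∧ l.im ≠ -κ}

/-- Convolution with the Green function: `(G̃∗f)(x,y) = ∬ G̃(x,x',y−y',λ) f(x',y') dx'dy'`. -/
def GtConv (κ : ℝ) (l : ℂ) (f : ℝ → ℝ → ℂ) (x y : ℝ) : ℂ :=
  ∫ p : ℝ × ℝ, Gt κ x p.1 (y - p.2) l * f p.1 p.2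

/-- `m(·,·,λ)` is a bounded solution of the integral equation `m = ϑ₋ − G̃∗(v₀ m)`. -/
def IsEigen (κ : ℝ) (v₀ : ℝ → ℝ → ℝ) (l : ℂ) (m : ℝ → ℝ → ℂ) : Prop :=
  (∃ M, ∀ x y, ‖m x y‖ ≤ M) ∧
  ∀ x y, m x y = varthetaM κ x l - GtConv κ l (fun x' y' => (v₀ x' y' : ℂ) * m x' y') x y

/-- Membership in `L¹ ∩ L∞` for a function on `ℝ²`. -/
def InL1Linf (f : ℝ → ℝ → ℝ) : Prop :=
  MemLp (fun p : ℝ × ℝ => f p.1 p.2) 1 volume ∧ MemLp (fun p : ℝ × ℝ => f p.1 p.2) ⊤ volume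

/-- The `L¹ ∩ L∞` norm of a function on `ℝ²`. -/
def normL1Linf (f : ℝ → ℝ → ℝ) : ℝ≥0∞ :=
  eLpNorm (fun p : ℝ × ℝ => f p.1 p.2) 1 volume + eLpNorm (fun p : ℝ × ℝ => f p.1 p.2) ⊤ volume

/-- Continuous scattering data `s_c(λ)` built from `v₀` and a family `m` of eigenfunctions. -/
def scData (κ : ℝ) (v₀ : ℝ → ℝ → ℝ) (m : ℝ → ℝ → ℂ → ℂ) (l : ℂ) : ℂ :=
  if 0 < l.im then
    ((Real.sign l.re / (2 * Real.pi) : ℝ) : ℂ) *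
      ∫ p : ℝ × ℝ,
        Complex.exp (-(Complex.I) * ((4 * l.re * l.im * p.2 + 2 * l.re * p.1 : ℝ) : ℂ)) *
          varthetaP κ p.1 (-(starRingEnd ℂ l)) * (v₀ p.1 p.2 : ℂ) * m p.1 p.2 l
  else
    ((Real.sign l.re : ℝ) : ℂ) / (2 * Real.pi * aFn κ (-(starRingEnd ℂ l))) *
      ∫ p : ℝ × ℝ,
        Complex.exp (-(Complex.I) * ((4 * l.re * l.im * p.2 + 2 * l.re * p.1 : ℝ) : ℂ)) *
          varphiM κ p.1 (-(starRingEnd ℂ l)) * (v₀ p.1 p.2 : ℂ) * m p.1 p.2 l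

/-- Indicator `E_{z,a}` of the open disk of radius `a` centered at `z`. -/
def Eind (z : ℂ) (a : ℝ) (l : ℂ) : ℝ := if ‖l - z‖ < a then 1 else 0

/-- The kernel `𝔊₊(x,x',y)`. -/
def GFrakP (κ x x' y : ℝ) : ℂ :=
  (∫ η in {t : ℝ | 1 ≤ |t|}, ((heav y : ℝ) : ℂ) *
      Complex.exp (-(y : ℂ) * (η : ℂ) ^ 2 + Complex.I * (η : ℂ) * ((x' - x - 2 * κ * y : ℝ) : ℂ)) *
      gFrak κ x x' ((η : ℂ) + Complex.I * κ) / (2 * Real.pi * aFn κ ((η : ℂ) + Complex.I * κ))) +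
  (∫ η in Set.Icc (-1 : ℝ) 1, ((heav y : ℝ) : ℂ) *
      (Complex.exp (-(y : ℂ) * (η : ℂ) ^ 2 + Complex.I * (η : ℂ) * ((x' - x - 2 * κ * y : ℝ) : ℂ)) *
          gFrak κ x x' ((η : ℂ) + Complex.I * κ) - gFrak κ x x' (Complex.I * κ)) /
      (2 * Real.pi * aFn κ ((η : ℂ) + Complex.I * κ))) +
  gFrak κ x x' (Complex.I * κ) * ((heav y * (1 + 1 / Real.pi) - 2 : ℝ) : ℂ)

/-- The kernel `𝔊₋(x,x',y)`. -/
def GFrakM (κ x x' y : ℝ) : ℂ :=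
  (∫ η in {t : ℝ | 1 ≤ |t|}, ((heav y : ℝ) : ℂ) *
      Complex.exp (-(y : ℂ) * (η : ℂ) ^ 2 + Complex.I * (η : ℂ) * ((x' - x + 2 * κ * y : ℝ) : ℂ)) *
      gFrak κ x x' ((η : ℂ) - Complex.I * κ) / (2 * Real.pi * aFn κ ((η : ℂ) - Complex.I * κ))) +
  (∫ η in Set.Icc (-1 : ℝ) 1, ((heav y : ℝ) : ℂ) *
      (Complex.exp (-(y : ℂ) * (η : ℂ) ^ 2 + Complex.I * (η : ℂ) * ((x' - x + 2 * κ * y : ℝ) : ℂ)) *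
          gFrak κ x x' ((η : ℂ) - Complex.I * κ) - gFrak κ x x' (-(Complex.I) * κ)) /
      (2 * Real.pi * aFn κ ((η : ℂ) - Complex.I * κ))) +
  gFrak κ x x' (-(Complex.I) * κ) * ((heav y * (1 + 1 / Real.pi) - 2 : ℝ) : ℂ)

/-- The regularized eigenfunction `𝔪(x,y,λ) = ((λ−iκ)/(λ−2iκ)) m(x,y,λ)`. -/
def mReg (κ : ℝ) (m : ℝ → ℝ → ℂ → ℂ) (x y : ℝ) (l : ℂ) : ℂ :=
  ((l - Complex.I * κ) / (l - 2 * Complex.I * κ)) * m x y l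

/-- The regularized continuous scattering data `𝔰_c(λ)`. -/
def scReg (κ : ℝ) (v₀ : ℝ → ℝ → ℝ) (m : ℝ → ℝ → ℂ → ℂ) (l : ℂ) : ℂ :=
  ((l - Complex.I * κ) * (-(starRingEnd ℂ l) - 2 * Complex.I * κ)) /
    ((l - 2 * Complex.I * κ) * (-(starRingEnd ℂ l) - Complex.I * κ)) * scData κ v₀ m l

/-- The forward scattering transform `(T𝔪)(x,y,ζ)`. -/
def Tm (κ : ℝ) (v₀ : ℝ → ℝ → ℝ) (m : ℝ → ℝ → ℂ → ℂ) (x y : ℝ) (ζ : ℂ) : ℂ :=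
  scReg κ v₀ m ζ * Complex.exp (Complex.I * ((4 * ζ.re * ζ.im * y + 2 * ζ.re * x : ℝ) : ℂ)) *
    mReg κ m x y (-(starRingEnd ℂ ζ))

/-! The reflection `λ ↦ -λ̄` is undone by complex conjugation on every ingredient of `G`:
`conj f(-λ̄) = f(λ)` for `ϕ₊`, `ψ₊`, `a` and `𝔤`, and `Re((-λ̄)² - (-λ̄ - λ')²) = Re(λ² - (λ + λ')²)`,
so the substitution `λ' ↦ -λ'` turns `conj G_c(-λ̄)` into `G_c(λ)`. In `G_d` the spectral point
`σiκ` is purely imaginary, hence fixed by the reflection. -/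

section Reflection

open ComplexConjugate Complex

variable (κ x x' y : ℝ)

lemma conj_neg_conj_add_I_mul (m : ℂ) : conj (-conj m + I * κ) = -(m + I * κ) := by
  simp only [map_add, map_neg, conj_conj, map_mul, conj_I, conj_ofReal]
  ring

lemma conj_neg_conj_sub_I_mul (m : ℂ) : conj (-conj m - I * κ) = -(m - I * κ) := by
  simp only [map_sub, map_neg, conj_conj, map_mul, conj_I, conj_ofReal]
  ring

lemma conj_two_I_mul_div_neg_conj_add (m : ℂ) :
    conj (2 * I * κ / (-conj m + I * κ)) = 2 * I * κ / (m + I * κ) := by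
  rw [map_div₀, conj_neg_conj_add_I_mul,
    show conj (2 * I * (κ : ℂ)) = -(2 * I * κ) by simp [map_ofNat], neg_div_neg_eq]

lemma conj_two_I_mul_div_neg_conj_sub (m : ℂ) :
    conj (2 * I * κ / (-conj m - I * κ)) = 2 * I * κ / (m - I * κ) := by
  rw [map_div₀, conj_neg_conj_sub_I_mul,
    show conj (2 * I * (κ : ℂ)) = -(2 * I * κ) by simp [map_ofNat], neg_div_neg_eq]

lemma conj_varphiP_neg_conj (m : ℂ) : conj (varphiP κ x (-conj m)) = varphiP κ x m := by
  rw [varphiP, varphiP, map_sub, map_one, map_mul, conj_two_I_mul_div_neg_conj_add]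
  simp only [map_div₀, map_one, map_add, conj_ofReal]

lemma conj_varthetaP_neg_conj (m : ℂ) : conj (varthetaP κ x (-conj m)) = varthetaP κ x m := by
  rw [varthetaP, varthetaP, map_sub, map_one, map_mul, conj_two_I_mul_div_neg_conj_add]
  simp only [map_div₀, map_one, map_add, conj_ofReal]

lemma conj_varphiM_neg_conj (m : ℂ) : conj (varphiM κ x (-conj m)) = varphiM κ x m := by
  rw [varphiM, varphiM, map_add, map_one, map_mul, conj_two_I_mul_div_neg_conj_sub]
  simp only [map_div₀, map_one, map_add, conj_ofReal]

lemma conj_varthetaM_neg_conj (m : ℂ) : conj (varthetaM κ x (-conj m)) = varthetaM κ x m := by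
  rw [varthetaM, varthetaM, map_add, map_one, map_mul, conj_two_I_mul_div_neg_conj_sub]
  simp only [map_div₀, map_one, map_add, conj_ofReal]

lemma conj_phiP_neg_conj (m : ℂ) : conj (phiP κ x (-conj m)) = phiP κ x m := by
  rw [phiP, phiP, map_mul, conj_varphiP_neg_conj, ← exp_conj]
  congr 2
  simp only [map_mul, map_neg, conj_I, conj_conj, conj_ofReal]
  ring

lemma conj_psiP_neg_conj (m : ℂ) : conj (psiP κ x (-conj m)) = psiP κ x m := by
  rw [psiP, psiP, map_mul, conj_varthetaP_neg_conj, ← exp_conj]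
  congr 2
  simp only [map_mul, map_neg, conj_I, conj_conj, conj_ofReal]
  ring

lemma im_neg_conj (m : ℂ) : (-conj m).im = m.im := by simp

lemma conj_aFn_neg_conj (m : ℂ) : conj (aFn κ (-conj m)) = aFn κ m := by
  rw [aFn, aFn, im_neg_conj]
  split_ifs
  · rw [aP, aP, map_div₀, conj_neg_conj_add_I_mul, conj_neg_conj_sub_I_mul,
      neg_div_neg_eq]
  · rw [aM, aM, map_div₀, conj_neg_conj_add_I_mul, conj_neg_conj_sub_I_mul,
      neg_div_neg_eq]

lemma conj_gFrak_neg_conj (m : ℂ) : conj (gFrak κ x x' (-conj m)) = gFrak κ x x' m := by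
  rw [gFrak, gFrak, im_neg_conj]
  split_ifs
  · rw [map_mul, conj_varphiP_neg_conj, conj_varthetaP_neg_conj]
  · rw [map_mul, conj_varphiM_neg_conj, conj_varthetaM_neg_conj]

lemma conj_gFrak_of_neg_conj_eq {m : ℂ} (hm : -conj m = m) :
    conj (gFrak κ x x' m) = gFrak κ x x' m := by
  simpa only [hm] using conj_gFrak_neg_conj κ x x' m

lemma neg_conj_add_ofReal_neg (l : ℂ) (t : ℝ) : -conj l + ((-t : ℝ) : ℂ) = -conj (l + t) := by
  simp only [map_add, conj_ofReal, ofReal_neg]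
  ring

lemma neg_conj_sq_sub_neg_conj_sq (l w : ℂ) :
    (-conj l) ^ 2 - (-conj w) ^ 2 = conj (l ^ 2 - w ^ 2) := by
  simp only [neg_sq, map_sub, map_pow]

lemma chiP_neg_conj_neg (l : ℂ) (t : ℝ) : chiP (-conj l) (-t) = chiP l t := by
  rw [chiP, chiP, neg_conj_add_ofReal_neg, neg_conj_sq_sub_neg_conj_sq, conj_re]

lemma chiM_neg_conj_neg (l : ℂ) (t : ℝ) : chiM (-conj l) (-t) = chiM l t := by
  rw [chiM, chiM, neg_conj_add_ofReal_neg, neg_conj_sq_sub_neg_conj_sq, conj_re]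

lemma conj_Gc_neg_conj (l : ℂ) : conj (Gc κ x x' y (-conj l)) = Gc κ x x' y l := by
  rw [Gc, ← integral_conj]
  conv_lhs => rw [← integral_neg_eq_self]
  congr 1 with t
  simp only [map_div₀, map_mul, conj_ofReal, map_ofNat, ← exp_conj, chiP_neg_conj_neg,
    chiM_neg_conj_neg, neg_conj_add_ofReal_neg, neg_conj_sq_sub_neg_conj_sq, conj_conj,
    conj_phiP_neg_conj, conj_psiP_neg_conj, conj_aFn_neg_conj]

lemma conj_Gd_neg_conj (l : ℂ) : conj (Gd κ x x' y (-conj l)) = Gd κ x x' y l := by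
  have hσ : -conj ((Real.sign l.im : ℂ) * I * κ) = (Real.sign l.im : ℂ) * I * κ := by simp
  rw [Gd, Gd, im_neg_conj, map_mul, map_mul, conj_ofReal, conj_gFrak_of_neg_conj_eq _ _ _ hσ,
    ← exp_conj]
  congr 3
  simp only [map_add, map_mul, map_pow, conj_conj, conj_ofReal, neg_sq]

end Reflection

theorem stmt8_general (κ : ℝ) (x x' y : ℝ) (l : ℂ) :
    (starRingEnd ℂ) (G κ x x' y (-(starRingEnd ℂ l))) = G κ x x' y l ∧
    (starRingEnd ℂ) (Gc κ x x' y (-(starRingEnd ℂ l))) = Gc κ x x' y l ∧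
    (starRingEnd ℂ) (Gd κ x x' y (-(starRingEnd ℂ l))) = Gd κ x x' y l := by
  refine ⟨?_, conj_Gc_neg_conj κ x x' y l, conj_Gd_neg_conj κ x x' y l⟩
  rw [G, G, map_add, conj_Gc_neg_conj, conj_Gd_neg_conj]

/-- reality symmetry of the Green function. -/
theorem stmt8 (κ : ℝ) (hκ : 0 < κ) (x x' y : ℝ) (hy : y ≠ 0) (l : ℂ)
    (hre : l.re ≠ 0) (him : l.im ≠ 0) (h1 : l.im ≠ κ) (h2 : l.im ≠ -κ) :
    (starRingEnd ℂ) (G κ x x' y (-(starRingEnd ℂ l))) = G κ x x' y l ∧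
    (starRingEnd ℂ) (Gc κ x x' y (-(starRingEnd ℂ l))) = Gc κ x x' y l ∧
    (starRingEnd ℂ) (Gd κ x x' y (-(starRingEnd ℂ l))) = Gd κ x x' y l :=
  stmt8_general κ x x' y l

end KPII
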